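/- (Entropy equality for semi-discrete entropy conservative schemes.) Let m ≥ 1, let η : ℝ^m → ℝ be differentiable with gradient W := ∇η, let ψ : ℝ^m → ℝ, and let F̃ : ℝ^m × ℝ^m → ℝ^m satisfy the entropy conservation condition ⟨W(b) − W(a), F̃(a,b)⟩ = ψ(b) − ψ(a) for all a, b ∈ ℝ^m. Let Δx > 0 and let U : ℝ → (ℤ → ℝ^m) be such that each t ↦ U_i(t) is differentiable and satisfies the semi-discrete scheme U_i′(t) = −(F̃(U_i(t), U_{i+1}(t)) − F̃(U_{i−1}(t), U_i(t)))/Δx. Define the numerical entropy flux q̃(a,b) = ⟨(W(a)+W(b))/2, F̃(a,b)⟩ − (ψ(a)+ψ(b))/2. Then for every i ∈ ℤ and every t, (d/dt) η(U_i(t)) + (q̃(U_i(t), U_{i+1}(t)) − q̃(U_{i−1}(t), U_i(t)))/Δx = 0. -/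

import Mathlib

/-
Write `q̃(a,b) = ⟨{{W}}, F̃(a,b)⟩ − {{ψ}}` with averages `{{·}}`. Entropy conservation of `F̃`
says that the jump terms `½⟨[W], F̃⟩` and `½[ψ]` agree, so `⟨W(a), F̃(a,b)⟩ = q̃(a,b) + ψ(a)` and
`⟨W(b), F̃(a,b)⟩ = q̃(a,b) + ψ(b)`. By the chain rule `d/dt η(U_i) = ⟨W(U_i), U_i′⟩`, and inserting
the scheme, the two values `ψ(U_i)` cancel, leaving `−(q̃_{i+1/2} − q̃_{i−1/2})/Δx`.
-/

open Matrix

/-- The continuous linear map `u ↦ w ⬝ᵥ u` on `ℝ^m`, used to express that a function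
has gradient `w`. -/
noncomputable def dotCLM {m : ℕ} (w : Fin m → ℝ) : (Fin m → ℝ) →L[ℝ] ℝ :=
  LinearMap.toContinuousLinearMap
    { toFun := fun u => w ⬝ᵥ u
      map_add' := fun x y => by simp [dotProduct, mul_add, Finset.sum_add_distrib]
      map_smul' := fun c x => by
        simp [dotProduct, Finset.mul_sum, mul_comm, mul_left_comm] }

section EntropyFlux

variable {α ι : Type*} [Fintype ι] (W : α → ι → ℝ) (ψ : α → ℝ) (F : α → α → ι → ℝ)

noncomputable def entropyFlux (a b : α) : ℝ :=
  ((2 : ℝ)⁻¹ • (W a + W b)) ⬝ᵥ F a b - (ψ a + ψ b) / 2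

def IsEntropyConservativeFlux : Prop :=
  ∀ a b, (W b - W a) ⬝ᵥ F a b = ψ b - ψ a

variable {W ψ F}

theorem dotProduct_flux_eq_entropyFlux_add_left
    (hF : IsEntropyConservativeFlux W ψ F) (a b : α) :
    W a ⬝ᵥ F a b = entropyFlux W ψ F a b + ψ a := by
  have h := hF a b
  simp only [entropyFlux, sub_dotProduct, smul_dotProduct, add_dotProduct, smul_eq_mul] at h ⊢
  linarith

theorem dotProduct_flux_eq_entropyFlux_add_right
    (hF : IsEntropyConservativeFlux W ψ F) (a b : α) :
    W b ⬝ᵥ F a b = entropyFlux W ψ F a b + ψ b := by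
  have h := hF a b
  simp only [entropyFlux, sub_dotProduct, smul_dotProduct, add_dotProduct, smul_eq_mul] at h ⊢
  linarith

theorem dotProduct_flux_sub_eq_entropyFlux_sub
    (hF : IsEntropyConservativeFlux W ψ F) (a b c : α) :
    W b ⬝ᵥ (F b c - F a b) = entropyFlux W ψ F b c - entropyFlux W ψ F a b := by
  rw [dotProduct_sub, dotProduct_flux_eq_entropyFlux_add_left hF,
    dotProduct_flux_eq_entropyFlux_add_right hF]
  ring

end EntropyFlux

theorem stmt17 (m : ℕ)
    (η : (Fin m → ℝ) → ℝ) (W : (Fin m → ℝ) → Fin m → ℝ) (ψ : (Fin m → ℝ) → ℝ)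
    (Ftil : (Fin m → ℝ) → (Fin m → ℝ) → Fin m → ℝ)
    (hgrad : ∀ x, HasFDerivAt η (dotCLM (W x)) x)
    (hEC : ∀ a b, (W b - W a) ⬝ᵥ Ftil a b = ψ b - ψ a)
    (Δx : ℝ)
    (U : ℝ → ℤ → Fin m → ℝ)
    (hscheme : ∀ (i : ℤ) (t : ℝ),
      HasDerivAt (fun s => U s i)
        (-(Δx⁻¹ • (Ftil (U t i) (U t (i + 1)) - Ftil (U t (i - 1)) (U t i)))) t) :
    let qtil : (Fin m → ℝ) → (Fin m → ℝ) → ℝ := fun a b =>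
      ((2 : ℝ)⁻¹ • (W a + W b)) ⬝ᵥ Ftil a b - (ψ a + ψ b) / 2
    ∀ (i : ℤ) (t : ℝ),
      HasDerivAt (fun s => η (U s i))
        (-((qtil (U t i) (U t (i + 1)) - qtil (U t (i - 1)) (U t i)) / Δx)) t := by
  intro qtil i t
  have chain := (hgrad (U t i)).comp_hasDerivAt t (hscheme i t)
  have hq : qtil = entropyFlux W ψ Ftil := rfl
  refine chain.congr_deriv ?_
  change W (U t i) ⬝ᵥ _ = _
  rw [dotProduct_neg, dotProduct_smul, dotProduct_flux_sub_eq_entropyFlux_sub hEC, hq,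
    smul_eq_mul, div_eq_inv_mul]
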